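/- Let p_0 ∈ (1/2, 1) and let A be an m × k random matrix (k ≤ m) whose entries have the form a_{ij} = c_{ij} + d_{ij} ε_{ij}, where the c_{ij} are fixed real numbers, the d_{ij} are fixed nonzero real numbers, and the ε_{ij} are mutually independent Bernoulli random variables with parameters p_{ij} ∈ (1 - p_0, p_0). Then the probability that the k columns of A are linearly dependent (i.e., rank A < k) is at most p_0^{m-k+1} / (1 - p_0). -/

import Mathlib

/-!
If the columns are dependent, some column `j` is the first one lying in the span of its
predecessors, a subspace of dimension at most `j`. A subspace of `ℝ^m` of dimension `r` is
determined by `r` suitable coordinates, so for fixed earlier columns, column `j` lies in it only if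
its `m - r` other entries, which are independent, each hit one prescribed value. Every atom of
`c + d ε` has mass at most `p₀`, so this happens with probability at most `p₀ ^ (m - j)`, and
summing over `j < k` gives at most `p₀ ^ (m - k + 1) / (1 - p₀)`.
-/

open MeasureTheory ProbabilityTheory Set
open scoped ENNReal

theorem exists_linearIndepOn_Iio_not_linearIndepOn_Iic {R M κ : Type*} [Semiring R]
    [AddCommMonoid M] [Module R M] [LinearOrder κ] [WellFoundedLT κ] {v : κ → M}
    (h : ¬ LinearIndependent R v) :
    ∃ j, LinearIndepOn R v (Iio j) ∧ ¬ LinearIndepOn R v (Iic j) := by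
  by_contra! H
  have hIic : ∀ j, LinearIndepOn R v (Iic j) := fun j => by
    induction j using WellFoundedLT.induction with
    | _ j ih =>
      refine H j ?_
      have hIio : Iio j = ⋃ i : Iio j, Iic (i : κ) := by
        ext z
        simp only [mem_Iio, mem_iUnion, mem_Iic, Subtype.exists, exists_prop]
        exact ⟨fun hz => ⟨z, hz, le_rfl⟩, fun ⟨i, hi, hzi⟩ => hzi.trans_lt hi⟩
      rw [hIio]
      exact linearIndepOn_iUnion_of_directed
        (monotone_Iic.comp (Subtype.mono_coe _)).directed_le fun i => ih i i.2
  apply h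
  rw [← linearIndepOn_univ_iff, ← iUnion_Iic]
  exact linearIndepOn_iUnion_of_directed monotone_Iic.directed_le hIic

theorem mem_span_image_Iio_of_not_linearIndepOn_Iic {K V κ : Type*} [DivisionRing K]
    [AddCommGroup V] [Module K V] [LinearOrder κ] {v : κ → V} {j : κ}
    (hIio : LinearIndepOn K v (Iio j)) (hIic : ¬ LinearIndepOn K v (Iic j)) :
    v j ∈ Submodule.span K (v '' Iio j) := by
  rw [← Iio_insert, linearIndepOn_insert self_notMem_Iio] at hIic
  tauto

/-- The coordinate functionals restricted to `W` span its dual; `T` indexes a basis among them. -/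
theorem Submodule.exists_card_le_finrank_injOn_restrict {K ι : Type*} [Field K] [Fintype ι]
    (W : Submodule K (ι → K)) :
    ∃ T : Finset ι, T.card ≤ Module.finrank K W ∧ InjOn T.restrict (W : Set (ι → K)) := by
  classical
  let coord : ι → Module.Dual K W := fun i => (LinearMap.proj i).comp W.subtype
  obtain ⟨b, -, -, hspan, hb⟩ :=
    exists_linearIndepOn_extension (linearIndepOn_empty K coord) (empty_subset univ)
  refine ⟨b.toFinset, ?_, fun x hx y hy hxy => ?_⟩
  · rw [toFinset_card, ← Subspace.dual_finrank_eq]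
    exact hb.fintype_card_le_finrank
  · let z : W := ⟨x - y, W.sub_mem hx hy⟩
    have hker : Submodule.span K (coord '' b) ≤ LinearMap.ker (Module.Dual.eval K W z) := by
      rw [Submodule.span_le]
      rintro _ ⟨i, hi, rfl⟩
      simpa [coord, z, sub_eq_zero] using congrFun hxy ⟨i, by simpa using hi⟩
    funext i
    simpa [coord, z, sub_eq_zero] using hker (hspan ⟨i, mem_univ i, rfl⟩)

theorem measurableSet_setOf_linearIndepOn {ι κ : Type*} [Fintype ι] [Finite κ] (s : Set κ) :
    MeasurableSet {x : κ → ι → ℝ | LinearIndepOn ℝ x s} := by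
  have hopen : IsOpen {v : s → ι → ℝ | LinearIndependent ℝ v} :=
    isOpen_setOfPred_linearIndependent
  exact (hopen.preimage (f := fun (x : κ → ι → ℝ) (i : s) => x i) (by fun_prop)).measurableSet

namespace MeasureTheory.Measure

section ProductMeasure

variable {δ : Type*} [Fintype δ] {X : δ → Type*} [∀ i, MeasurableSpace (X i)]
  {μ : ∀ i, Measure (X i)} [∀ i, IsProbabilityMeasure (μ i)]

theorem pi_le_of_forall_update_le [DecidableEq δ] {A : Set (∀ i, X i)} (hA : MeasurableSet A)
    (j : δ) {q : ℝ≥0∞} (h : ∀ x, μ j {y | Function.update x j y ∈ A} ≤ q) :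
    Measure.pi μ A ≤ q := by
  have hslice : ∀ x, ∫⁻ y, A.indicator 1 (Function.update x j y) ∂μ j ≤ ∫⁻ _, q ∂μ j := by
    intro x
    change ∫⁻ y, (Function.update x j ⁻¹' A).indicator 1 y ∂μ j ≤ _
    rw [lintegral_indicator_one (measurable_update x hA), lintegral_const, measure_univ, mul_one]
    exact h x
  calc Measure.pi μ A = ∫⁻ x, A.indicator 1 x ∂Measure.pi μ := (lintegral_indicator_one hA).symm
    _ ≤ ∫⁻ _, q ∂Measure.pi μ :=
      lintegral_le_of_lmarginal_le {j} (measurable_one.indicator hA) measurable_const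
        (by rw [lmarginal_singleton, lmarginal_singleton]; exact hslice)
    _ = q := by simp

theorem pi_le_pow_of_subsingleton {P : ℝ≥0∞} (hμ : ∀ i a, μ i {a} ≤ P)
    {S : Set (∀ i, X i)} (hS : S.Subsingleton) : Measure.pi μ S ≤ P ^ Fintype.card δ := by
  rcases hS.eq_empty_or_singleton with rfl | ⟨a, rfl⟩
  · simp
  · rw [pi_singleton]
    exact Finset.prod_le_pow_card _ _ _ fun i _ => hμ i (a i)

theorem pi_le_pow_of_injOn_restrict [DecidableEq δ] {P : ℝ≥0∞} (hμ : ∀ i a, μ i {a} ≤ P)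
    {S : Set (∀ i, X i)} (hS : MeasurableSet S) {T : Finset δ} (hT : InjOn T.restrict S) :
    Measure.pi μ S ≤ P ^ (Fintype.card δ - T.card) := by
  have hfiber : ∀ x, Measure.pi (fun i : ↥Tᶜ => μ i)
      {y | Function.updateFinset x Tᶜ y ∈ S} ≤ P ^ (Fintype.card δ - T.card) := by
    intro x
    rw [← Finset.card_compl, ← Fintype.card_coe]
    refine pi_le_pow_of_subsingleton (μ := fun i : ↥Tᶜ => μ i) (fun i => hμ i)
      fun y hy y' hy' => ?_
    have hyy' := hT hy hy' <| funext fun i => by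
      simp [Finset.restrict, Function.updateFinset, Finset.notMem_compl.mpr i.2]
    funext i
    simpa [Function.updateFinset, i.2] using congrFun hyy' i
  calc Measure.pi μ S = ∫⁻ x, S.indicator 1 x ∂Measure.pi μ := (lintegral_indicator_one hS).symm
    _ ≤ ∫⁻ _, P ^ (Fintype.card δ - T.card) ∂Measure.pi μ := by
      refine lintegral_le_of_lmarginal_le Tᶜ (measurable_one.indicator hS) measurable_const
        fun x => ?_
      change ∫⁻ y, (Function.updateFinset x Tᶜ ⁻¹' S).indicator 1 y ∂_ ≤ ∫⁻ _, _ ∂_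
      rw [lintegral_indicator_one (measurable_updateFinset hS), lintegral_const, measure_univ,
        mul_one]
      exact hfiber x
    _ = P ^ (Fintype.card δ - T.card) := by simp

end ProductMeasure

theorem pi_submodule_le_pow {ι : Type*} [Fintype ι] {ν : ι → Measure ℝ}
    [∀ i, IsProbabilityMeasure (ν i)] {P : ℝ≥0∞} (hP : P ≤ 1) (hν : ∀ i a, ν i {a} ≤ P)
    (W : Submodule ℝ (ι → ℝ)) {r : ℕ} (hW : Module.finrank ℝ W ≤ r) :
    Measure.pi ν W ≤ P ^ (Fintype.card ι - r) := by
  classical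
  obtain ⟨T, hTcard, hT⟩ := W.exists_card_le_finrank_injOn_restrict
  calc Measure.pi ν W ≤ P ^ (Fintype.card ι - T.card) :=
        pi_le_pow_of_injOn_restrict hν W.closed_of_finiteDimensional.measurableSet hT
    _ ≤ P ^ (Fintype.card ι - r) := pow_le_pow_right_of_le_one' hP (by omega)

theorem pi_pi_setOf_not_linearIndependent_le {ι κ : Type*} [Fintype ι] [Fintype κ]
    [LinearOrder κ] [LocallyFiniteOrderBot κ] {ν : κ → ι → Measure ℝ}
    [∀ j i, IsProbabilityMeasure (ν j i)] {P : ℝ≥0∞} (hP : P ≤ 1)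
    (hν : ∀ j i a, ν j i {a} ≤ P) :
    Measure.pi (fun j => Measure.pi (ν j)) {x | ¬ LinearIndependent ℝ x} ≤
      ∑ j : κ, P ^ (Fintype.card ι - (Finset.Iio j).card) := by
  classical
  let B : κ → Set (κ → ι → ℝ) := fun j =>
    {x | LinearIndepOn ℝ x (Iio j)} ∩ {x | LinearIndepOn ℝ x (Iic j)}ᶜ
  have hB : ∀ j, MeasurableSet (B j) := fun j =>
    (measurableSet_setOf_linearIndepOn _).inter (measurableSet_setOf_linearIndepOn _).compl
  have hslice : ∀ j x, {y | Function.update x j y ∈ B j} ⊆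
      Submodule.span ℝ (x '' ↑(Finset.Iio j)) := fun j x y ⟨hIio, hIic⟩ => by
    have hagree : EqOn (Function.update x j y) x (Iio j) := fun i hi =>
      Function.update_of_ne (ne_of_lt hi) y x
    simpa [hagree.image_eq] using mem_span_image_Iio_of_not_linearIndepOn_Iic hIio hIic
  have hrank : ∀ (j : κ) (x : κ → ι → ℝ),
      Module.finrank ℝ (Submodule.span ℝ (x '' ↑(Finset.Iio j))) ≤ (Finset.Iio j).card :=
    fun j x => by
      rw [← Finset.coe_image]
      exact (finrank_span_finset_le_card _).trans Finset.card_image_le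
  calc Measure.pi (fun j => Measure.pi (ν j)) {x | ¬ LinearIndependent ℝ x}
      ≤ Measure.pi (fun j => Measure.pi (ν j)) (⋃ j, B j) := measure_mono fun x hx =>
        mem_iUnion.mpr (exists_linearIndepOn_Iio_not_linearIndepOn_Iic hx)
    _ ≤ ∑ j, Measure.pi (fun j => Measure.pi (ν j)) (B j) := measure_iUnion_fintype_le _ _
    _ ≤ ∑ j, P ^ (Fintype.card ι - (Finset.Iio j).card) := Finset.sum_le_sum fun j _ =>
        pi_le_of_forall_update_le (hB j) j fun x =>
          (measure_mono (hslice j x)).trans (pi_submodule_le_pow hP (hν j) _ (hrank j x))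

end MeasureTheory.Measure

section Probability

variable {Ω : Type*} [MeasurableSpace Ω] {μ : Measure Ω} [IsProbabilityMeasure μ]

theorem ProbabilityTheory.iIndepFun.map_curry_eq_pi {ι κ β : Type*} [Fintype ι] [Fintype κ]
    [MeasurableSpace β] {X : ι → κ → Ω → β} (hX : ∀ i j, Measurable (X i j))
    (h : iIndepFun (fun p : ι × κ => X p.1 p.2) μ) :
    μ.map (fun ω i j => X i j ω) = Measure.pi fun i => Measure.pi fun j => μ.map (X i j) := by
  have : ∀ i j, IsProbabilityMeasure (μ.map (X i j)) := fun i j =>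
    Measure.isProbabilityMeasure_map (hX i j).aemeasurable
  have hcurry : (fun ω i j => X i j ω) =
      MeasurableEquiv.curry ι κ β ∘ fun ω (p : ι × κ) => X p.1 p.2 ω := rfl
  have hlaw := h.map_fun_eq_pi_map fun p : ι × κ => (hX p.1 p.2).aemeasurable
  rw [hcurry, ← Measure.map_map (MeasurableEquiv.measurable _) (by fun_prop), hlaw,
    ← Measure.infinitePi_eq_pi, Measure.infinitePi_map_curry (fun i j => μ.map (X i j))]
  simp only [Measure.infinitePi_eq_pi]

theorem measure_setOf_not_linearIndependent_le {ι κ : Type*} [Fintype ι] [Fintype κ]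
    [LinearOrder κ] [LocallyFiniteOrderBot κ] {Y : κ → ι → Ω → ℝ}
    (hY : ∀ j i, Measurable (Y j i)) (hindep : iIndepFun (fun p : κ × ι => Y p.1 p.2) μ)
    {P : ℝ≥0∞} (hP : P ≤ 1) (hatom : ∀ j i t, μ.map (Y j i) {t} ≤ P) :
    μ {ω | ¬ LinearIndependent ℝ fun j i => Y j i ω} ≤
      ∑ j : κ, P ^ (Fintype.card ι - (Finset.Iio j).card) := by
  have : ∀ j i, IsProbabilityMeasure (μ.map (Y j i)) := fun j i =>
    Measure.isProbabilityMeasure_map (hY j i).aemeasurable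
  have hdep : MeasurableSet {x : κ → ι → ℝ | ¬ LinearIndependent ℝ x} :=
    isOpen_setOfPred_linearIndependent.measurableSet.compl
  have hmap := Measure.map_apply (μ := μ) (f := fun ω j i => Y j i ω) (by fun_prop) hdep
  rw [hindep.map_curry_eq_pi hY] at hmap
  exact hmap.symm.trans_le (Measure.pi_pi_setOf_not_linearIndependent_le hP hatom)

theorem measure_setOf_eq_le_of_bernoulli {ε : Ω → ℝ} (hε : Measurable ε) {p q : ℝ}
    (hpq : p ≤ q) (hpq' : 1 - p ≤ q) (h1 : μ {ω | ε ω = 1} = ENNReal.ofReal p)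
    (h0 : μ {ω | ε ω = 0} = ENNReal.ofReal (1 - p)) (t : ℝ) :
    μ {ω | ε ω = t} ≤ ENNReal.ofReal q := by
  by_cases ht1 : t = 1
  · subst ht1; rw [h1]; exact ENNReal.ofReal_le_ofReal hpq
  by_cases ht0 : t = 0
  · subst ht0; rw [h0]; exact ENNReal.ofReal_le_ofReal hpq'
  have hmeas : ∀ s : ℝ, MeasurableSet {ω | ε ω = s} := fun s => hε (measurableSet_singleton s)
  have hdisj : Disjoint {ω | ε ω = 0} {ω | ε ω = 1} :=
    disjoint_left.mpr fun ω h0 h1 => zero_ne_one (h0.symm.trans h1)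
  have hfull : 1 ≤ μ ({ω | ε ω = 0} ∪ {ω | ε ω = 1}) := by
    rw [measure_union hdisj (hmeas 1), h0, h1]
    calc 1 = ENNReal.ofReal (1 - p + p) := by simp
      _ ≤ ENNReal.ofReal (1 - p) + ENNReal.ofReal p := ENNReal.ofReal_add_le
  calc μ {ω | ε ω = t} ≤ μ ({ω | ε ω = 0} ∪ {ω | ε ω = 1})ᶜ := measure_mono fun ω hω => by
        simp_all
    _ = 0 := by
      rw [prob_compl_eq_one_sub ((hmeas 0).union (hmeas 1)), tsub_eq_zero_of_le hfull]
    _ ≤ ENNReal.ofReal q := zero_le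

omit [IsProbabilityMeasure μ] in
theorem map_const_add_mul_singleton_le {ε : Ω → ℝ} (hε : Measurable ε) (c : ℝ) {d : ℝ}
    (hd : d ≠ 0) {B : ℝ≥0∞} (hB : ∀ s, μ {ω | ε ω = s} ≤ B) (t : ℝ) :
    μ.map (fun ω => c + d * ε ω) {t} ≤ B := by
  have hpre : (fun ω => c + d * ε ω) ⁻¹' {t} = {ω | ε ω = (t - c) / d} := by
    ext ω
    rw [mem_preimage, mem_singleton_iff, mem_ofPred_eq, eq_div_iff hd]
    constructor <;> intro h <;> linarith
  rw [Measure.map_apply (by fun_prop) (measurableSet_singleton t), hpre]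
  exact hB _

end Probability

theorem sum_range_pow_sub_le {p : ℝ} (hp₀ : 0 ≤ p) (hp₁ : p < 1) {k m : ℕ} (hkm : k ≤ m) :
    ∑ j ∈ Finset.range k, p ^ (m - j) ≤ p ^ (m - k + 1) / (1 - p) := by
  rw [Finset.range_eq_Ico, Finset.sum_Ico_reflect _ _ (by omega), Nat.sub_zero,
    show m + 1 - k = m - k + 1 by omega]
  exact geom_sum_Ico_le_of_lt_one hp₀ hp₁

/-- **Probability that a full set of random columns is dependent.**
Let `A` be an `m × k` random matrix (`k ≤ m`) with entries `a i j = c i j + d i j * ε i j`,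
where the `c i j` are fixed reals, the `d i j` are fixed nonzero reals, and the `ε i j`
are independent Bernoulli random variables with parameters in `(1 - p₀, p₀)`,
`p₀ ∈ (1/2, 1)`. Then the probability that the `k` columns of `A` are linearly dependent
is at most `p₀^(m - k + 1) / (1 - p₀)`. -/
theorem columns_dependent_bound (p₀ : ℝ) (hp₀ : p₀ ∈ Set.Ioo (1 / 2 : ℝ) 1)
    (m k : ℕ) (hkm : k ≤ m)
    (Ω : Type) [MeasureSpace Ω] [IsProbabilityMeasure (ℙ : Measure Ω)]
    (c d : Fin m → Fin k → ℝ) (hd : ∀ i j, d i j ≠ 0)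
    (ε : Fin m → Fin k → Ω → ℝ) (p : Fin m → Fin k → ℝ)
    (hmeas : ∀ i j, Measurable (ε i j))
    (hp : ∀ i j, p i j ∈ Set.Ioo (1 - p₀) p₀)
    (hber : ∀ i j, ℙ {ω | ε i j ω = 1} = ENNReal.ofReal (p i j) ∧
                   ℙ {ω | ε i j ω = 0} = ENNReal.ofReal (1 - p i j))
    (hindep : iIndepFun
      (fun q : Fin m × Fin k => ε q.1 q.2) ℙ) :
    (ℙ {ω | ¬ LinearIndependent ℝ
        (fun j : Fin k => fun i : Fin m => c i j + d i j * ε i j ω)}).toReal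
      ≤ p₀ ^ (m - k + 1) / (1 - p₀) := by
  obtain ⟨hp₀_half, hp₀_one⟩ := hp₀
  have hp₀_nonneg : 0 ≤ p₀ := by linarith
  have hatom : ∀ j i t,
      (ℙ : Measure Ω).map (fun ω => c i j + d i j * ε i j ω) {t} ≤ ENNReal.ofReal p₀ :=
    fun j i => map_const_add_mul_singleton_le (hmeas i j) _ (hd i j) <|
      measure_setOf_eq_le_of_bernoulli (hmeas i j) (hp i j).2.le (by linarith [(hp i j).1])
        (hber i j).1 (hber i j).2
  have hentries : iIndepFun (fun q : Fin k × Fin m => fun ω =>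
      c q.2 q.1 + d q.2 q.1 * ε q.2 q.1 ω) ℙ :=
    (hindep.comp (fun q x => c q.1 q.2 + d q.1 q.2 * x) fun q => by fun_prop).precomp
      Prod.swap_injective
  have hbound := measure_setOf_not_linearIndependent_le (fun j i => by fun_prop) hentries
    (ENNReal.ofReal_le_one.mpr hp₀_one.le) hatom
  simp only [Fintype.card_fin, Fin.card_Iio, ← ENNReal.ofReal_pow hp₀_nonneg,
    ← ENNReal.ofReal_sum_of_nonneg fun j _ => pow_nonneg hp₀_nonneg _] at hbound
  calc _ ≤ ∑ j : Fin k, p₀ ^ (m - j) :=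
        ENNReal.toReal_le_of_le_ofReal (Finset.sum_nonneg fun j _ => by positivity) hbound
    _ = ∑ j ∈ Finset.range k, p₀ ^ (m - j) := Fin.sum_univ_eq_sum_range (fun j => p₀ ^ (m - j)) k
    _ ≤ p₀ ^ (m - k + 1) / (1 - p₀) := sum_range_pow_sub_le hp₀_nonneg hp₀_one hkm
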